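/- Let 𝒫 be a nonempty finite set, let f, g, b : 𝒫 → ℝ with b(P) ≥ 0 for all P ∈ 𝒫, and let ε ≥ 0. Suppose that |f(P) − g(P)| ≤ ε·b(P) for every P ∈ 𝒫, and let P̂ ∈ 𝒫 be a maximizer over 𝒫 of the pessimistic objective P ↦ g(P) − ε·b(P). Then for every P* ∈ 𝒫 one has f(P̂) ≥ f(P*) − 2ε·b(P*). -/

import Mathlib

theorem pessimism_selection_general {P : Type*}
    (f g b : P → ℝ) (ε : ℝ)
    (herr : ∀ p, |f p - g p| ≤ ε * b p)
    (Phat : P) (hmax : ∀ p, g p - ε * b p ≤ g Phat - ε * b Phat) :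
    ∀ Pstar : P, f Pstar - 2 * ε * b Pstar ≤ f Phat := by
  intro Pstar
  have hstar := (abs_sub_le_iff.mp (herr Pstar)).1
  have hhat := (abs_sub_le_iff.mp (herr Phat)).2
  calc f Pstar - 2 * ε * b Pstar ≤ g Pstar - ε * b Pstar := by linarith
    _ ≤ g Phat - ε * b Phat := hmax Pstar
    _ ≤ f Phat := by linarith

/-- Pessimism-principle selection lemma: if `|f - g| ≤ ε·b` pointwise and `Phat`
maximizes the pessimistic objective `g - ε·b` over the nonempty finite set `P`,
then `f Phat ≥ f Pstar - 2ε·b Pstar` for every `Pstar`. -/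
theorem pessimism_selection {P : Type*} [Fintype P] [Nonempty P]
    (f g b : P → ℝ) (hb : ∀ p, 0 ≤ b p) (ε : ℝ) (hε : 0 ≤ ε)
    (herr : ∀ p, |f p - g p| ≤ ε * b p)
    (Phat : P) (hmax : ∀ p, g p - ε * b p ≤ g Phat - ε * b Phat) :
    ∀ Pstar : P, f Pstar - 2 * ε * b Pstar ≤ f Phat :=
  pessimism_selection_general f g b ε herr Phat hmax
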